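/- arXiv:2305.00065 — 3 statements merged into one kernel-verified Lean document; each statement's English description precedes it below -/
import Mathlib

section
/- For every isomorphism F between L-structures A and B and every element a of A, the similarity (A,B) ⊨ a ≈ F(a) holds, i.e., (A,B) ⊨ a ≲ F(a) and (B,A) ⊨ F(a) ≲ a. (First Isomorphism Theorem) -/
open FirstOrder FirstOrder.Language

universe u v w x

namespace Similarity

variable {L : FirstOrder.Language.{u, v}}

/-- An `L`-formula in one designated free variable `y` is *conjunctive* iff it is built from
literals (equalities, disequalities, relation atoms and negated relation atoms) using only
conjunction and the quantifiers `∀` and `∃`; in particular it contains no disjunctions and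
negation occurs only directly in front of atomic formulas. -/
inductive IsConjunctive : ∀ {n : ℕ}, L.BoundedFormula (Fin 1) n → Prop
  | equal {n} (t u : L.Term (Fin 1 ⊕ Fin n)) : IsConjunctive (BoundedFormula.equal t u)
  | nequal {n} (t u : L.Term (Fin 1 ⊕ Fin n)) : IsConjunctive (BoundedFormula.equal t u).not
  | rel {n l} (R : L.Relations l) (ts : Fin l → L.Term (Fin 1 ⊕ Fin n)) :
      IsConjunctive (BoundedFormula.rel R ts)
  | nrel {n l} (R : L.Relations l) (ts : Fin l → L.Term (Fin 1 ⊕ Fin n)) :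
      IsConjunctive (BoundedFormula.rel R ts).not
  | inf {n} {φ ψ : L.BoundedFormula (Fin 1) n} :
      IsConjunctive φ → IsConjunctive ψ → IsConjunctive (φ ⊓ ψ)
  | all {n} {φ : L.BoundedFormula (Fin 1) (n + 1)} : IsConjunctive φ → IsConjunctive φ.all
  | ex {n} {φ : L.BoundedFormula (Fin 1) (n + 1)} : IsConjunctive φ → IsConjunctive φ.ex

/-- The conjunctive type `c-Type_A(a)` of an element `a` in an `L`-structure `A`:
the set of conjunctive `L`-formulas `φ(y)` such that `A ⊨ φ(a)`. -/
def cType {M : Type w} (S : L.Structure M) (a : M) : Set (L.Formula (Fin 1)) :=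
  { φ | IsConjunctive φ ∧ @Formula.Realize L M S (Fin 1) φ (fun _ => a) }

/-- The set of justifications `c-Type_{(A,B)}(a ≲ b) := c-Type_A(a) ∩ c-Type_B(b)`. -/
def Just {M : Type w} {N : Type x} (SA : L.Structure M) (SB : L.Structure N)
    (a : M) (b : N) : Set (L.Formula (Fin 1)) :=
  cType SA a ∩ cType SB b

/-- `(A,B) ⊨ a ≲ b` for structures `A`, `B` whose domains are (possibly distinct) types
`M`, `N`, so that `a : M` is not an element of `B` and the exclusion clause
"except for `a` in case `a ∈ B`" is vacuous: there is no `b' : N` such that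
`c-Type_A(a) ∩ c-Type_B(b)` is strictly contained in `c-Type_A(a) ∩ c-Type_B(b')`. -/
def Lesssim {M : Type w} {N : Type x} (SA : L.Structure M) (SB : L.Structure N)
    (a : M) (b : N) : Prop :=
  ¬ ∃ b' : N, Just SA SB a b ⊂ Just SA SB a b'

/-- `(A,B) ⊨ a ≈ b` iff `(A,B) ⊨ a ≲ b` and `(B,A) ⊨ b ≲ a`. -/
def Approx {M : Type w} {N : Type x} (SA : L.Structure M) (SB : L.Structure N)
    (a : M) (b : N) : Prop :=
  Lesssim SA SB a b ∧ Lesssim SB SA b a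

/-- An isomorphism between `L`-structures: a bijective map preserving all function and
relation symbols of `L` in both directions. -/
def IsIso {M : Type w} {N : Type x} (SA : L.Structure M) (SB : L.Structure N)
    (F : M → N) : Prop :=
  Function.Bijective F ∧
    (∀ {l} (f : L.Functions l) (xs : Fin l → M), F (SA.funMap f xs) = SB.funMap f (F ∘ xs)) ∧
    (∀ {l} (R : L.Relations l) (xs : Fin l → M), SA.RelMap R xs ↔ SB.RelMap R (F ∘ xs))

/-- **First Isomorphism Theorem.** For any isomorphism `F : A → B` between `L`-structures
and any element `a` of `A`, the similarity `(A,B) ⊨ a ≈ F a` holds, i.e.,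
`(A,B) ⊨ a ≲ F a` and `(B,A) ⊨ F a ≲ a`. -/
theorem first_isomorphism_theorem {M : Type w} {N : Type x}
    (SA : L.Structure M) (SB : L.Structure N) (F : M → N) (hF : IsIso SA SB F) (a : M) :
    Approx SA SB a (F a) := by
  letI := SA; letI := SB
  let g : M ≃[L] N :=
    { toEquiv := Equiv.ofBijective F hF.1
      map_fun' := fun f xs => hF.2.1 f xs
      map_rel' := fun R xs => (hF.2.2 R xs).symm }
  have key : cType SA a = cType SB (F a) := by
    ext φ
    have : (fun _ : Fin 1 => F a) = g ∘ (fun _ => a) := rfl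
    simp only [cType, Set.mem_setOf_eq, this, StrongHomClass.realize_formula g φ]
  constructor
  · rintro ⟨b', hb'⟩
    have h1 : Just SA SB a (F a) = cType SA a := by
      simp [Just, key, Set.inter_self]
    have h2 : Just SA SB a b' ⊆ cType SA a := Set.inter_subset_left
    rw [h1] at hb'
    exact hb'.2 h2
  · rintro ⟨a', ha'⟩
    have h1 : Just SB SA (F a) a = cType SB (F a) := by
      simp [Just, key, Set.inter_self]
    have h2 : Just SB SA (F a) a' ⊆ cType SB (F a) := Set.inter_subset_left
    rw [h1] at ha'
    exact ha'.2 h2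

end Similarity
end

section
/- For all isomorphisms F : A → C and G : B → D between L-structures, and all elements a ∈ A and b ∈ B, the similarity (A,B) ⊨ a ≈ b holds if and only if (C,D) ⊨ F(a) ≈ G(b) holds. (Second Isomorphism Theorem) -/
open FirstOrder FirstOrder.Language

universe u v w x

namespace Similarity

variable {L : FirstOrder.Language.{u, v}}

universe w₁ x₁

lemma cType_map {M : Type w} {P : Type w₁} (SA : L.Structure M) (SC : L.Structure P)
    (F : M → P) (hF : IsIso SA SC F) (a : M) : cType SC (F a) = cType SA a := by
  letI := SA; letI := SC
  let e : M ≃[L] P :=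
    ⟨Equiv.ofBijective F hF.1, fun f xs => hF.2.1 f xs, fun R xs => (hF.2.2 R xs).symm⟩
  ext φ
  have : (fun _ : Fin 1 => F a) = e ∘ (fun _ => a) := rfl
  simp only [cType, Set.mem_setOf_eq, this, StrongHomClass.realize_formula]

lemma lesssim_map {M : Type w} {N : Type x} {P : Type w₁} {Q : Type x₁}
    (SA : L.Structure M) (SB : L.Structure N) (SC : L.Structure P) (SD : L.Structure Q)
    (F : M → P) (G : N → Q) (hF : IsIso SA SC F) (hG : IsIso SB SD G) (a : M) (b : N) :
    Lesssim SA SB a b ↔ Lesssim SC SD (F a) (G b) := by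
  have hJ : ∀ (x : M) (y : N), Just SC SD (F x) (G y) = Just SA SB x y := by
    intro x y
    unfold Just
    rw [cType_map SA SC F hF x, cType_map SB SD G hG y]
  unfold Lesssim
  constructor
  · rintro h ⟨b', hb'⟩
    obtain ⟨b'', rfl⟩ := hG.1.2 b'
    rw [hJ, hJ] at hb'
    exact h ⟨b'', hb'⟩
  · rintro h ⟨b', hb'⟩
    refine h ⟨G b', ?_⟩
    rw [hJ, hJ]
    exact hb'

/-- **Second Isomorphism Theorem.** For any isomorphisms `F : A → C` and `G : B → D`
between `L`-structures and any elements `a ∈ A`, `b ∈ B`,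
`(A,B) ⊨ a ≈ b` iff `(C,D) ⊨ F a ≈ G b`. -/
theorem second_isomorphism_theorem {M : Type w} {N : Type x} {P : Type w₁} {Q : Type x₁}
    (SA : L.Structure M) (SB : L.Structure N) (SC : L.Structure P) (SD : L.Structure Q)
    (F : M → P) (G : N → Q) (hF : IsIso SA SC F) (hG : IsIso SB SD G) (a : M) (b : N) :
    Approx SA SB a b ↔ Approx SC SD (F a) (G b) := by
  unfold Approx
  rw [lesssim_map SA SB SC SD F G hF hG a b, lesssim_map SB SA SD SC G F hG hF b a]

end Similarity
end

section
/- Reflexivity of the similarity relation may fail across a pair of structures: there exist L-structures A and B with the same domain and an element a of that domain such that (A,B) ⊨ a ≴ a. Concretely, with L having a single unary function symbol f, let A be the structure on ℕ with f interpreted as the successor n ↦ n+1, and let B be the structure on ℕ with f(1) = 0, f(0) = 2, and f(n) = n+1 for n ≥ 2; then c-Type_{(A,B)}(1 ≲ 1) is strictly contained in c-Type_{(A,B)}(1 ≲ 0), hence (A,B) ⊨ 1 ≴ 1. -/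
open FirstOrder FirstOrder.Language

universe u v w x

namespace Similarity

variable {L : FirstOrder.Language.{u, v}}

/-- `(A,B) ⊨ a ≲ b` for structures `A`, `B` sharing the same domain `M` (so that `a` is an
element of `B` and the exclusion clause applies): there is no `b' : M` with `b' ≠ a` such
that `c-Type_A(a) ∩ c-Type_B(b)` is strictly contained in `c-Type_A(a) ∩ c-Type_B(b')`. -/
def LesssimSame {M : Type w} (SA SB : L.Structure M) (a b : M) : Prop :=
  ¬ ∃ b' : M, b' ≠ a ∧ Just SA SB a b ⊂ Just SA SB a b'

/-- `(A,B) ⊨ a ≈ b` iff `(A,B) ⊨ a ≲ b` and `(B,A) ⊨ b ≲ a`, for structures sharing the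
same domain. -/
def ApproxSame {M : Type w} (SA SB : L.Structure M) (a b : M) : Prop :=
  LesssimSame SA SB a b ∧ LesssimSame SB SA b a

end Similarity

/-- The first-order language with a single unary function symbol `f`. -/
def L1 : FirstOrder.Language :=
  ⟨fun n => match n with | 1 => PUnit | _ => Empty, fun _ => Empty⟩

/-- `ℕ` as an `L1`-structure with `f` interpreted as the successor `n ↦ n + 1`. -/
def succStruct : L1.Structure ℕ where
  funMap {n} f xs := match n, f with | 1, _ => xs 0 + 1
  RelMap {n} r _ := r.elim

/-- `ℕ` as an `L1`-structure with `f 1 = 0`, `f 0 = 2`, and `f n = n + 1` for `n ≥ 2`. -/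
def swapStruct : L1.Structure ℕ where
  funMap {n} f xs :=
    match n, f with
    | 1, _ => match xs 0 with
      | 0 => 2
      | 1 => 0
      | (m + 2) => m + 3
  RelMap {n} r _ := r.elim


/-! The transposition `0 ↔ 1` is an isomorphism from `(ℕ, succ)` onto `B`, so `0` has in `B`
the conjunctive type that `1` has in `A`; hence `c-Type_{(A,B)}(1 ≲ 0) = c-Type_A(1)`, which
contains `c-Type_{(A,B)}(1 ≲ 1)`. The containment is strict: `∃ x, f x = y` holds of `1` in `A`
and of `0` in `B`, but `1` is not a value of `f` in `B`. -/

namespace Similarity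

variable {L : FirstOrder.Language.{u, v}}

theorem cType_equiv_apply {M : Type w} {N : Type x} {SM : L.Structure M} {SN : L.Structure N}
    (g : M ≃[L] N) (a : M) : cType SN (g a) = cType SM a := by
  ext φ
  exact and_congr_right fun _ => StrongHomClass.realize_formula g φ (v := fun _ => a)

theorem just_subset_just_of_cType_eq {M : Type w} {N : Type x} (SA : L.Structure M)
    (SB : L.Structure N) {a : M} {b b' : N} (h : cType SB b' = cType SA a) :
    Just SA SB a b ⊆ Just SA SB a b' := by
  rw [Just, Just, h, Set.inter_self]
  exact Set.inter_subset_left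

end Similarity

namespace L1

open Similarity

def f : L1.Functions 1 := PUnit.unit

def inRange : L1.Formula (Fin 1) :=
  ∃' (f.apply₁ &0 =' Term.var (Sum.inl 0))

theorem isConjunctive_inRange : IsConjunctive inRange := .ex (.equal _ _)

theorem realize_inRange {M : Type w} (S : L1.Structure M) (a : M) :
    @Formula.Realize L1 M S _ inRange (fun _ => a) ↔ ∃ x, S.funMap f ![x] = a := by
  simp only [inRange, Formula.Realize, BoundedFormula.realize_ex, BoundedFormula.realize_bdEqual,
    Term.realize_functions_apply₁, Term.realize_var, Sum.elim_inl, Function.comp_apply,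
    Sum.elim_inr]
  exact Iff.rfl

theorem swap_succ_eq_swapStruct_funMap (m : ℕ) :
    Equiv.swap 0 1 (m + 1) = swapStruct.funMap f ![Equiv.swap 0 1 m] := by
  rcases m with _ | _ | m <;> simp [Equiv.swap_apply_def] <;> rfl

def swapEquiv : @Language.Equiv L1 ℕ ℕ succStruct swapStruct :=
  @Language.Equiv.mk L1 ℕ ℕ succStruct swapStruct (Equiv.swap 0 1)
    (fun {n} g xs => match n, g with | 1, _ => swap_succ_eq_swapStruct_funMap (xs 0))
    (fun r => r.elim)

theorem cType_swapStruct_zero : cType swapStruct 0 = cType succStruct 1 :=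
  cType_equiv_apply swapEquiv 1

theorem inRange_mem_just_one_zero : inRange ∈ Just succStruct swapStruct (1 : ℕ) (0 : ℕ) :=
  ⟨⟨isConjunctive_inRange, (realize_inRange _ _).2 ⟨0, rfl⟩⟩,
    isConjunctive_inRange, (realize_inRange _ _).2 ⟨1, rfl⟩⟩

theorem inRange_not_mem_cType_swapStruct_one : inRange ∉ cType swapStruct 1 := by
  rintro ⟨-, h⟩
  obtain ⟨x, hx⟩ := (realize_inRange _ _).1 h
  rcases x with _ | _ | m <;> cases hx

end L1

open Similarity in
/-- Reflexivity of the similarity relation may fail across a pair of structures: there are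
`L1`-structures `A`, `B` with the same domain and an element `a` of that domain with
`(A,B) ⊨ a ≴ a`. Concretely, for `A = (ℕ, succ)` and `B = (ℕ, f)` with `f 1 = 0`,
`f 0 = 2` and `f n = n + 1` for `n ≥ 2`, the justification set `c-Type_{(A,B)}(1 ≲ 1)` is
strictly contained in `c-Type_{(A,B)}(1 ≲ 0)`, hence `(A,B) ⊨ 1 ≴ 1`. -/
theorem similarity_refl_may_fail_in_pairs :
    (∃ (M : Type) (SA SB : L1.Structure M) (a : M), ¬ LesssimSame SA SB a a) ∧
      Just succStruct swapStruct (1 : ℕ) (1 : ℕ) ⊂ Just succStruct swapStruct (1 : ℕ) (0 : ℕ) ∧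
      ¬ LesssimSame succStruct swapStruct (1 : ℕ) (1 : ℕ) := by
  have hsub : Just succStruct swapStruct (1 : ℕ) (1 : ℕ) ⊂
      Just succStruct swapStruct (1 : ℕ) (0 : ℕ) :=
    (Set.ssubset_iff_of_subset (just_subset_just_of_cType_eq _ _ L1.cType_swapStruct_zero)).2
      ⟨L1.inRange, L1.inRange_mem_just_one_zero,
        fun h => L1.inRange_not_mem_cType_swapStruct_one h.2⟩
  have hfail : ¬ LesssimSame succStruct swapStruct (1 : ℕ) (1 : ℕ) :=
    fun h => h ⟨0, zero_ne_one, hsub⟩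
  exact ⟨⟨ℕ, succStruct, swapStruct, 1, hfail⟩, hsub, hfail⟩
end
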